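/- For any binary word w of length n, Σ(w) ≥ Λ(w)/48, where Σ(w) is the sum of squared occurrence counts of all nonempty factors, and Λ(w) = max{ |η|² (ℓ+1)³ : η^ℓ is a factor of w, η a nonempty binary word, ℓ ≥ 1 }. -/

import Mathlib

open Filter

/-- Number of occurrences of `ξ` as a factor of `w` (occurrence at position `i`
means `ξ = w_{i+1}...w_{i+|ξ|}`). -/
def occ (w ξ : List Bool) : ℕ :=
  ((List.range w.length).filter (fun i => ξ.isPrefixOf (w.drop i))).length

/-- `ℓ`-fold concatenation `η^ℓ` of the word `η`. -/
def wpow (η : List Bool) (ℓ : ℕ) : List Bool := (List.replicate ℓ η).flatten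

/-- The Kamae–Xue complexity `Σ(w) = Σ_{ξ ∈ {0,1}^+} |w|_ξ²`.  Since only
factors of `w` contribute nonzero terms, the sum is taken over the (finite) set
of nonempty sublists of `w`, which contains all factors of `w`. -/
def kxSum (w : List Bool) : ℕ :=
  ∑ ξ ∈ w.sublists.toFinset.filter (fun ξ => ξ ≠ []), (occ w ξ) ^ 2

/-- `Λ(w) = max{|η|²(ℓ+1)³ : η nonempty, ℓ ≥ 1, η^ℓ a factor of w}`. -/
noncomputable def Lam (w : List Bool) : ℕ :=
  sSup {m | ∃ η ℓ, η ≠ ([] : List Bool) ∧ 1 ≤ ℓ ∧ wpow η ℓ <:+: w ∧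
    m = η.length ^ 2 * (ℓ + 1) ^ 3}

/-- A nonempty word is prime (primitive) if it is not a proper power. -/
def IsPrimeWord (η : List Bool) : Prop :=
  η ≠ [] ∧ ∀ ζ ℓ, 2 ≤ ℓ → η ≠ wpow ζ ℓ

/-- `|v|_{ξ,m}`: occurrences of `ξ` in `v` ending in the last `m` positions. -/
def occEnd (v ξ : List Bool) (m : ℕ) : ℕ :=
  ((List.range v.length).filter
    (fun i => ξ.isPrefixOf (v.drop i) && decide (v.length < i + ξ.length + m))).length

/-- The prefix `x_1 x_2 ⋯ x_n` of the infinite sequence `x`. -/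
def pref (x : ℕ → Bool) (n : ℕ) : List Bool := (List.range n).map x

/-!
`Σ` only grows from a factor to the whole word, so it suffices to treat `w = η^ℓ`; let
`p = |η|`. For every length `t ≤ p⌈ℓ/2⌉`, the length-`t` factor starting at each of the first
`p` positions recurs at the `⌊ℓ/2⌋` shifts by multiples of `p`. A word `ξ` starting at `k` of
those `p` positions therefore occurs at least `k⌊ℓ/2⌋` times and contributes at least
`k⌊ℓ/2⌋²` to `Σ`; summing over `ξ` and `t` gives `Σ(η^ℓ) ≥ p²⌈ℓ/2⌉⌊ℓ/2⌋² ≥ p²(ℓ+1)³/48` when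
`ℓ ≥ 2`. For `ℓ = 1`, counting the factors of length at most `⌈p/2⌉` that start in the first
`⌊p/2⌋ + 1` positions gives `Σ(η) ≥ p²/4`.
-/

open Finset

def fac {α : Type*} (w : List α) (i t : ℕ) : List α := (w.drop i).take t

section Factor

variable {α : Type*}

lemma length_fac {w : List α} {i t : ℕ} (h : i + t ≤ w.length) : (fac w i t).length = t := by
  simp only [fac, List.length_take, List.length_drop]
  omega

lemma fac_sublist (w : List α) (i t : ℕ) : (fac w i t).Sublist w :=
  (List.take_sublist _ _).trans (List.drop_sublist _ _)

lemma take_fac (w : List α) (i : ℕ) {t m : ℕ} (h : t ≤ m) : (fac w i m).take t = fac w i t := by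
  rw [fac, fac, List.take_take, Nat.min_eq_left h]

lemma fac_append_left (u v : List α) (i t : ℕ) : fac (u ++ v) (u.length + i) t = fac v i t := by
  rw [fac, fac, List.drop_length_add_append]

lemma fac_append_of_le {u : List α} (v : List α) {i t : ℕ} (h : i + t ≤ u.length) :
    fac (u ++ v) i t = fac u i t := by
  rw [fac, fac, List.drop_append_of_le_length (by omega),
    List.take_append_of_le_length (by simp only [List.length_drop]; omega)]

end Factor

lemma occ_eq_card (w ξ : List Bool) :
    occ w ξ = #{i ∈ range w.length | ξ <+: w.drop i} := by
  simp only [← List.isPrefixOf_iff_prefix, card_def, filter_val, range_val, Multiset.range,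
    Multiset.filter_coe, Multiset.coe_card, Bool.decide_eq_true, occ]

lemma card_le_occ {w ξ : List Bool} {I : Finset ℕ}
    (h : ∀ i ∈ I, i < w.length ∧ ξ <+: w.drop i) : #I ≤ occ w ξ := by
  rw [occ_eq_card]
  exact card_le_card fun i hi => mem_filter.2 ⟨mem_range.2 (h i hi).1, (h i hi).2⟩

lemma occ_le_occ_of_infix {u w : List Bool} (h : u <:+: w) (ξ : List Bool) :
    occ u ξ ≤ occ w ξ := by
  obtain ⟨x, y, rfl⟩ := h
  rw [occ_eq_card, ← card_image_of_injective _ (add_right_injective x.length)]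
  apply card_le_occ
  simp only [mem_image, mem_filter, mem_range]
  rintro _ ⟨i, ⟨hi, hξ⟩, rfl⟩
  refine ⟨by simp only [List.length_append]; omega, ?_⟩
  rw [List.append_assoc, List.drop_length_add_append, List.drop_append_of_le_length hi.le]
  exact hξ.trans (List.prefix_append _ _)

lemma kxSum_le_kxSum_of_infix {u w : List Bool} (h : u <:+: w) : kxSum u ≤ kxSum w := by
  unfold kxSum
  calc _ ≤ ∑ ξ ∈ u.sublists.toFinset.filter (· ≠ []), occ w ξ ^ 2 :=
        sum_le_sum fun ξ _ => Nat.pow_le_pow_left (occ_le_occ_of_infix h ξ) 2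
    _ ≤ _ := by
        refine sum_le_sum_of_subset fun ξ => ?_
        simp only [mem_filter, List.mem_toFinset, List.mem_sublists]
        exact fun ⟨hsub, hne⟩ => ⟨hsub.trans h.sublist, hne⟩

lemma mul_card_fac_eq_le_occ {w : List Bool} {p r c t : ℕ} (ht : 0 < t) (hr : r ≤ p)
    (hrep : ∀ i < r, ∀ j < c, i + j * p + t ≤ w.length ∧ fac w (i + j * p) t = fac w i t)
    (ξ : List Bool) : c * #{i ∈ range r | fac w i t = ξ} ≤ occ w ξ := by
  have hinj : Set.InjOn (fun q : ℕ × ℕ => q.1 + q.2 * p)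
      ↑({i ∈ range r | fac w i t = ξ} ×ˢ range c) := by
    rintro ⟨i, j⟩ hq ⟨i', j'⟩ hq' h
    simp only [mem_coe, mem_product, mem_filter, mem_range] at hq hq' h
    have hi : i = i' := by
      simpa [Nat.add_mul_mod_self_right, Nat.mod_eq_of_lt (by omega : i < p),
        Nat.mod_eq_of_lt (by omega : i' < p)] using congrArg (· % p) h
    subst hi
    obtain rfl : j = j' := Nat.eq_of_mul_eq_mul_right (by omega : 0 < p) (by omega)
    rfl
  rw [mul_comm, ← card_range c, ← card_product, ← card_image_of_injOn hinj]
  apply card_le_occ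
  simp only [mem_image, mem_product, mem_filter, mem_range]
  rintro _ ⟨⟨i, j⟩, ⟨⟨hi, rfl⟩, hj⟩, rfl⟩
  obtain ⟨hlen, hfac⟩ := hrep i hi j hj
  refine ⟨by dsimp only; omega, ?_⟩
  rw [← hfac]
  exact List.take_prefix _ _

lemma sq_mul_le_sum_occ_sq {w : List Bool} {p r c t : ℕ} (ht : 0 < t) (hr : r ≤ p)
    (hrep : ∀ i < r, ∀ j < c, i + j * p + t ≤ w.length ∧ fac w (i + j * p) t = fac w i t) :
    c ^ 2 * r ≤ ∑ ξ ∈ (range r).image (fac w · t), occ w ξ ^ 2 := by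
  calc c ^ 2 * r
      = ∑ ξ ∈ (range r).image (fac w · t), c ^ 2 * #{i ∈ range r | fac w i t = ξ} := by
        rw [← mul_sum, ← card_eq_sum_card_image, card_range]
    _ ≤ ∑ ξ ∈ (range r).image (fac w · t), occ w ξ ^ 2 := by
        refine sum_le_sum fun ξ _ => ?_
        calc c ^ 2 * #{i ∈ range r | fac w i t = ξ}
            ≤ (c * #{i ∈ range r | fac w i t = ξ}) ^ 2 := by
              rw [mul_pow]
              exact Nat.mul_le_mul_left _ (Nat.le_self_pow two_ne_zero _)
          _ ≤ occ w ξ ^ 2 := Nat.pow_le_pow_left (mul_card_fac_eq_le_occ ht hr hrep ξ) 2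

lemma mul_sq_mul_le_kxSum {w : List Bool} {p r c m : ℕ} (hr : r ≤ p)
    (hrep : ∀ i < r, ∀ j < c, i + j * p + m ≤ w.length ∧ fac w (i + j * p) m = fac w i m) :
    m * (c ^ 2 * r) ≤ kxSum w := by
  rcases Nat.eq_zero_or_pos c with rfl | hc
  · simp
  have hrep_t : ∀ t ≤ m, ∀ i < r, ∀ j < c,
      i + j * p + t ≤ w.length ∧ fac w (i + j * p) t = fac w i t := fun t ht i hi j hj =>
    ⟨by linarith [(hrep i hi j hj).1],
      by rw [← take_fac _ _ ht, (hrep i hi j hj).2, take_fac _ _ ht]⟩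
  have hlen : ∀ t ≤ m, ∀ ξ ∈ (range r).image (fac w · t), ξ.length = t := by
    intro t ht ξ hξ
    obtain ⟨i, hi, rfl⟩ := mem_image.1 hξ
    exact length_fac (by simpa using (hrep_t t ht i (mem_range.1 hi) 0 hc).1)
  have hdisj : (Icc 1 m : Set ℕ).PairwiseDisjoint fun t => (range r).image (fac w · t) :=
    fun t ht t' ht' hne => disjoint_left.2 fun ξ hξ hξ' =>
      hne ((hlen t (mem_Icc.1 ht).2 ξ hξ).symm.trans (hlen t' (mem_Icc.1 ht').2 ξ hξ'))
  calc m * (c ^ 2 * r) = ∑ _t ∈ Icc 1 m, c ^ 2 * r := by simp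
    _ ≤ ∑ t ∈ Icc 1 m, ∑ ξ ∈ (range r).image (fac w · t), occ w ξ ^ 2 :=
        sum_le_sum fun t ht => sq_mul_le_sum_occ_sq (mem_Icc.1 ht).1 hr (hrep_t t (mem_Icc.1 ht).2)
    _ = ∑ ξ ∈ (Icc 1 m).biUnion fun t => (range r).image (fac w · t), occ w ξ ^ 2 :=
        (sum_biUnion hdisj).symm
    _ ≤ kxSum w := by
        refine sum_le_sum_of_subset fun ξ hξ => ?_
        obtain ⟨t, ht, hξt⟩ := mem_biUnion.1 hξ
        obtain ⟨ht1, htm⟩ := mem_Icc.1 ht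
        obtain ⟨i, -, rfl⟩ := mem_image.1 hξt
        simp only [mem_filter, List.mem_toFinset, List.mem_sublists]
        refine ⟨fac_sublist w i t, fun hnil => ?_⟩
        have := hlen t htm _ hξt
        rw [hnil, List.length_nil] at this
        omega

lemma sq_length_le_four_mul_kxSum (w : List Bool) : w.length ^ 2 ≤ 4 * kxSum w := by
  have hcount : (w.length + 1) / 2 * (1 ^ 2 * (w.length / 2 + 1)) ≤ kxSum w :=
    mul_sq_mul_le_kxSum le_rfl fun i hi j hj => by
      obtain rfl : j = 0 := by omega
      simp only [zero_mul, add_zero, and_true]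
      omega
  rw [one_pow, one_mul] at hcount
  obtain ⟨q, hq | hq⟩ := Nat.even_or_odd' w.length <;> rw [hq] at hcount ⊢
  · rw [show (2 * q + 1) / 2 = q by omega, show 2 * q / 2 = q by omega] at hcount
    nlinarith
  · rw [show (2 * q + 1 + 1) / 2 = q + 1 by omega, show (2 * q + 1) / 2 = q by omega] at hcount
    nlinarith

lemma length_wpow (η : List Bool) (ℓ : ℕ) : (wpow η ℓ).length = ℓ * η.length := by
  rw [wpow, List.length_flatten, List.map_replicate, List.sum_replicate, smul_eq_mul]

lemma wpow_add (η : List Bool) (a b : ℕ) : wpow η (a + b) = wpow η a ++ wpow η b := by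
  rw [wpow, wpow, wpow, List.replicate_add, List.flatten_append]

lemma fac_wpow_add_mul (η : List Bool) {ℓ i j t : ℕ} (hj : j ≤ ℓ)
    (h : i + j * η.length + t ≤ ℓ * η.length) :
    fac (wpow η ℓ) (i + j * η.length) t = fac (wpow η ℓ) i t := by
  obtain ⟨k, rfl⟩ := Nat.exists_eq_add_of_le hj
  have hk : i + t ≤ (wpow η k).length := by
    rw [length_wpow]
    linarith [add_mul j k η.length]
  calc fac (wpow η (j + k)) (i + j * η.length) t
      = fac (wpow η j ++ wpow η k) ((wpow η j).length + i) t := by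
        rw [wpow_add, length_wpow, add_comm i]
    _ = fac (wpow η k ++ wpow η j) i t := by rw [fac_append_left, fac_append_of_le _ hk]
    _ = fac (wpow η (j + k)) i t := by rw [add_comm j, wpow_add]

lemma sq_length_mul_le_kxSum_wpow (η : List Bool) (ℓ : ℕ) :
    η.length ^ 2 * ((ℓ + 1) / 2 * (ℓ / 2) ^ 2) ≤ kxSum (wpow η ℓ) := by
  have hcount := mul_sq_mul_le_kxSum (w := wpow η ℓ) (c := ℓ / 2)
    (m := η.length * ((ℓ + 1) / 2)) le_rfl fun i hi j hj => by
      have hshift : (j + 1) * η.length ≤ ℓ / 2 * η.length := Nat.mul_le_mul_right _ hj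
      have hsplit : ℓ / 2 * η.length + η.length * ((ℓ + 1) / 2) = ℓ * η.length := by
        rw [mul_comm η.length, ← add_mul]
        congr 1
        omega
      have hfit : i + j * η.length + η.length * ((ℓ + 1) / 2) ≤ ℓ * η.length := by
        linarith [add_mul j 1 η.length]
      exact ⟨by rwa [length_wpow], fac_wpow_add_mul η (by omega) hfit⟩
  linarith

lemma sq_length_mul_succ_pow_three_le_kxSum_wpow (η : List Bool) {ℓ : ℕ} (hℓ : 1 ≤ ℓ) :
    η.length ^ 2 * (ℓ + 1) ^ 3 ≤ 48 * kxSum (wpow η ℓ) := by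
  obtain rfl | hℓ : ℓ = 1 ∨ 2 ≤ ℓ := by omega
  · have hη : wpow η 1 = η := by simp [wpow]
    rw [hη]
    linarith [sq_length_le_four_mul_kxSum η]
  have harith : (ℓ + 1) ^ 3 ≤ 48 * ((ℓ + 1) / 2 * (ℓ / 2) ^ 2) := by
    obtain ⟨q, rfl | rfl⟩ := Nat.even_or_odd' ℓ
    · rw [show (2 * q + 1) / 2 = q by omega, show 2 * q / 2 = q by omega]
      nlinarith
    · have hq : 1 ≤ q := by omega
      rw [show (2 * q + 1 + 1) / 2 = q + 1 by omega, show (2 * q + 1) / 2 = q by omega]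
      nlinarith
  calc η.length ^ 2 * (ℓ + 1) ^ 3
      ≤ η.length ^ 2 * (48 * ((ℓ + 1) / 2 * (ℓ / 2) ^ 2)) := Nat.mul_le_mul_left _ harith
    _ = 48 * (η.length ^ 2 * ((ℓ + 1) / 2 * (ℓ / 2) ^ 2)) := by ring
    _ ≤ 48 * kxSum (wpow η ℓ) := Nat.mul_le_mul_left _ (sq_length_mul_le_kxSum_wpow η ℓ)

/-- For any binary word `w`, `Σ(w) ≥ Λ(w)/48`. -/
theorem lam_le_48_kxSum (w : List Bool) :
    Lam w ≤ 48 * kxSum w := by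
  apply csSup_le'
  rintro _ ⟨η, ℓ, -, hℓ, hinfix, rfl⟩
  calc η.length ^ 2 * (ℓ + 1) ^ 3 ≤ 48 * kxSum (wpow η ℓ) :=
        sq_length_mul_succ_pow_three_le_kxSum_wpow η hℓ
    _ ≤ 48 * kxSum w := Nat.mul_le_mul_left 48 (kxSum_le_kxSum_of_infix hinfix)
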